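/- arXiv:2211.05542 — 9 statements merged into one kernel-verified Lean document; each statement's English description precedes it below -/
import Mathlib

section
/- For every real x with 0 ≤ x ≤ 1, one has (1+x)^{1+x} − 1 ≤ 8·log(1+x). -/
/-!
For `x ≤ 1` the exponent `1 + x` is at most `2`, so `(1+x)^{1+x} - 1 ≤ (1+x)^2 - 1 = x(2+x)`,
while `log(1+x) ≥ 2x/(x+2)`; the claim reduces to `(2+x)^2 ≤ 16`.
-/

/-- For 0 ≤ x ≤ 1, (1+x)^{1+x} − 1 ≤ 8·log(1+x). -/
theorem stmt_5 (x : ℝ) (h0 : 0 ≤ x) (h1 : x ≤ 1) :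
    Real.exp ((1 + x) * Real.log (1 + x)) - 1 ≤ 8 * Real.log (1 + x) := by
  have hpos : 0 < 1 + x := by linarith
  have hpow : Real.exp ((1 + x) * Real.log (1 + x)) ≤ (1 + x) ^ 2 := by
    rw [mul_comm, ← Real.rpow_def_of_pos hpos, ← Real.rpow_two]
    exact Real.rpow_le_rpow_of_exponent_le (by linarith) (by linarith)
  have hpoly : (1 + x) ^ 2 - 1 ≤ 8 * (2 * x / (x + 2)) := by
    rw [mul_div_assoc', le_div_iff₀ (by linarith)]
    nlinarith [mul_nonneg h0 (mul_nonneg (by linarith : (0:ℝ) ≤ 2 - x) (by linarith : (0:ℝ) ≤ 6 + x))]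
  calc Real.exp ((1 + x) * Real.log (1 + x)) - 1
      ≤ (1 + x) ^ 2 - 1 := by linarith
    _ ≤ 8 * (2 * x / (x + 2)) := hpoly
    _ ≤ 8 * Real.log (1 + x) := by gcongr; exact Real.le_log_one_add_of_nonneg h0
end

section
/- For every real x with 0 ≤ x ≤ 1, one has 1 − (1+x)^{−(1+x)} ≤ 2·log(1+x). -/
/-- For 0 ≤ x ≤ 1, 1 − (1+x)^{−(1+x)} ≤ 2·log(1+x). -/
theorem stmt_6 (x : ℝ) (h0 : 0 ≤ x) (h1 : x ≤ 1) :
    1 - Real.exp (-((1 + x) * Real.log (1 + x))) ≤ 2 * Real.log (1 + x) := by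
  have hl : 0 ≤ Real.log (1 + x) := Real.log_nonneg (by linarith)
  have key := Real.add_one_le_exp (-((1 + x) * Real.log (1 + x)))
  nlinarith
end

section
/- Let a, b : ℕ → ℝ be nonincreasing sequences such that for every n, ∑_{i=1}^n a_i ≤ ∑_{i=1}^n b_i. Let f : ℝ → ℝ be a continuous, monotonically increasing and convex function. Then for every n, ∑_{i=1}^n f(a_i) ≤ ∑_{i=1}^n f(b_i). -/
open Finset

/-- Slope of `f` between two points. -/
noncomputable def slopeF (f : ℝ → ℝ) (x y : ℝ) : ℝ := (f y - f x) / (y - x)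

lemma slopeF_nonneg (f : ℝ → ℝ) (hf : Monotone f) {x y : ℝ} (hxy : x < y) :
    0 ≤ slopeF f x y :=
  div_nonneg (sub_nonneg.2 (hf hxy.le)) (sub_nonneg.2 hxy.le)

/-- Slopes of a convex function are monotone in both endpoints. -/
lemma slopeF_mono (f : ℝ → ℝ) (hf : ConvexOn ℝ Set.univ f) {x y x' y' : ℝ}
    (hxy : x < y) (hx'y' : x' < y') (hx : x ≤ x') (hy : y ≤ y') :
    slopeF f x y ≤ slopeF f x' y' := by
  have h1 : (f y - f x) / (y - x) ≤ (f y' - f x) / (y' - x) :=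
    hf.secant_mono (Set.mem_univ x) (Set.mem_univ y) (Set.mem_univ y')
      hxy.ne' (lt_of_lt_of_le hxy hy).ne' hy
  have h2 : (f x - f y') / (x - y') ≤ (f x' - f y') / (x' - y') :=
    hf.secant_mono (Set.mem_univ y') (Set.mem_univ x) (Set.mem_univ x')
      (lt_of_lt_of_le hxy hy).ne hx'y'.ne hx
  have e1 : (f x - f y') / (x - y') = (f y' - f x) / (y' - x) := by
    rw [← neg_div_neg_eq]; ring_nf
  have e2 : (f x' - f y') / (x' - y') = (f y' - f x') / (y' - x') := by
    rw [← neg_div_neg_eq]; ring_nf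
  calc slopeF f x y = (f y - f x) / (y - x) := rfl
    _ ≤ (f y' - f x) / (y' - x) := h1
    _ ≤ (f y' - f x') / (y' - x') := by rw [← e1, ← e2]; exact h2
    _ = slopeF f x' y' := rfl

/-- Auxiliary "subgradient-like" sequence of slopes. -/
noncomputable def cseq (f : ℝ → ℝ) (a b : ℕ → ℝ) : ℕ → ℝ
  | 0 => if a 0 = b 0 then slopeF f (a 0) (a 0 + 1)
         else slopeF f (min (a 0) (b 0)) (max (a 0) (b 0))
  | (i+1) => if a (i+1) = b (i+1) then cseq f a b i
         else slopeF f (min (a (i+1)) (b (i+1))) (max (a (i+1)) (b (i+1)))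

/-- Invariant: `cseq i` is a slope over an interval dominating `[min, max]` at `i`. -/
lemma cseq_spec (f : ℝ → ℝ) (a b : ℕ → ℝ) (ha : Antitone a) (hb : Antitone b) (i : ℕ) :
    ∃ u v : ℝ, u < v ∧ min (a i) (b i) ≤ u ∧ max (a i) (b i) ≤ v ∧
      cseq f a b i = slopeF f u v := by
  induction i with
  | zero =>
    by_cases h : a 0 = b 0
    · refine ⟨a 0, a 0 + 1, by linarith, ?_, ?_, by simp [cseq, h]⟩
      · simp [h]
      · simp [h]
    · rcases lt_or_gt_of_ne h with hlt | hlt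
      · exact ⟨min (a 0) (b 0), max (a 0) (b 0), by simp [min_eq_left hlt.le, max_eq_right hlt.le, hlt],
          le_refl _, le_refl _, by simp [cseq, h]⟩
      · exact ⟨min (a 0) (b 0), max (a 0) (b 0), by simp [min_eq_right hlt.le, max_eq_left hlt.le, hlt],
          le_refl _, le_refl _, by simp [cseq, h]⟩
  | succ i ih =>
    by_cases h : a (i+1) = b (i+1)
    · obtain ⟨u, v, huv, hu, hv, hc⟩ := ih
      refine ⟨u, v, huv, le_trans ?_ hu, le_trans ?_ hv, by simp [cseq, h, hc]⟩
      · exact min_le_min (ha (Nat.le_succ i)) (hb (Nat.le_succ i))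
      · exact max_le_max (ha (Nat.le_succ i)) (hb (Nat.le_succ i))
    · refine ⟨min (a (i+1)) (b (i+1)), max (a (i+1)) (b (i+1)), ?_, le_refl _, le_refl _,
        by simp [cseq, h]⟩
      rcases lt_or_gt_of_ne h with hlt | hlt
      · simp [min_eq_left hlt.le, max_eq_right hlt.le, hlt]
      · simp [min_eq_right hlt.le, max_eq_left hlt.le, hlt]

lemma cseq_nonneg (f : ℝ → ℝ) (a b : ℕ → ℝ) (ha : Antitone a) (hb : Antitone b)
    (hf_mono : Monotone f) (i : ℕ) : 0 ≤ cseq f a b i := by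
  obtain ⟨u, v, huv, _, _, hc⟩ := cseq_spec f a b ha hb i
  rw [hc]; exact slopeF_nonneg f hf_mono huv

lemma cseq_antitone_succ (f : ℝ → ℝ) (a b : ℕ → ℝ) (ha : Antitone a) (hb : Antitone b)
    (hf_conv : ConvexOn ℝ Set.univ f) (i : ℕ) :
    cseq f a b (i+1) ≤ cseq f a b i := by
  by_cases h : a (i+1) = b (i+1)
  · simp [cseq, h]
  · obtain ⟨u, v, huv, hu, hv, hc⟩ := cseq_spec f a b ha hb i
    have h1 : min (a (i+1)) (b (i+1)) < max (a (i+1)) (b (i+1)) := by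
      rcases lt_or_gt_of_ne h with hlt | hlt
      · simp [min_eq_left hlt.le, max_eq_right hlt.le, hlt]
      · simp [min_eq_right hlt.le, max_eq_left hlt.le, hlt]
    have h2 : min (a (i+1)) (b (i+1)) ≤ u :=
      le_trans (min_le_min (ha (Nat.le_succ i)) (hb (Nat.le_succ i))) hu
    have h3 : max (a (i+1)) (b (i+1)) ≤ v :=
      le_trans (max_le_max (ha (Nat.le_succ i)) (hb (Nat.le_succ i))) hv
    calc cseq f a b (i+1) = slopeF f (min (a (i+1)) (b (i+1))) (max (a (i+1)) (b (i+1))) := by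
            simp [cseq, h]
      _ ≤ slopeF f u v := slopeF_mono f hf_conv h1 huv h2 h3
      _ = cseq f a b i := hc.symm

lemma cseq_key (f : ℝ → ℝ) (a b : ℕ → ℝ) (i : ℕ) :
    f (a i) - f (b i) = cseq f a b i * (a i - b i) := by
  by_cases h : a i = b i
  · simp [h]
  · have hcval : cseq f a b i = slopeF f (min (a i) (b i)) (max (a i) (b i)) := by
      cases i with
      | zero => simp [cseq, h]
      | succ j => simp [cseq, h]
    rw [hcval]
    rcases lt_or_gt_of_ne h with hlt | hlt
    · rw [min_eq_left hlt.le, max_eq_right hlt.le]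
      unfold slopeF
      have hne : b i - a i ≠ 0 := sub_ne_zero.2 (Ne.symm h)
      have : (f (b i) - f (a i)) / (b i - a i) * (a i - b i) = -(f (b i) - f (a i)) := by
        rw [show a i - b i = -(b i - a i) by ring, mul_neg, div_mul_cancel₀ _ hne]
      linarith
    · rw [min_eq_right hlt.le, max_eq_left hlt.le]
      unfold slopeF
      have hne : a i - b i ≠ 0 := sub_ne_zero.2 h
      have : (f (a i) - f (b i)) / (a i - b i) * (a i - b i) = f (a i) - f (b i) :=
        div_mul_cancel₀ _ hne
      linarith

/-- Abel summation estimate. -/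
lemma abel_est (c d : ℕ → ℝ) (hmono : ∀ i, c (i+1) ≤ c i)
    (hS : ∀ k, ∑ i ∈ Finset.range k, d i ≤ 0) :
    ∀ n, ∑ i ∈ Finset.range (n+1), c i * d i ≤ c n * ∑ i ∈ Finset.range (n+1), d i := by
  intro n
  induction n with
  | zero => simp
  | succ n ih =>
    rw [Finset.sum_range_succ, Finset.sum_range_succ (f := d)]
    have h1 : c n * ∑ i ∈ Finset.range (n+1), d i ≤ c (n+1) * ∑ i ∈ Finset.range (n+1), d i :=
      mul_le_mul_of_nonpos_right (hmono n) (hS (n+1))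
    calc (∑ i ∈ Finset.range (n+1), c i * d i) + c (n+1) * d (n+1)
        ≤ c n * (∑ i ∈ Finset.range (n+1), d i) + c (n+1) * d (n+1) := by linarith
      _ ≤ c (n+1) * (∑ i ∈ Finset.range (n+1), d i) + c (n+1) * d (n+1) := by linarith
      _ = c (n+1) * ((∑ i ∈ Finset.range (n+1), d i) + d (n+1)) := by ring

/-- Weak majorization of nonincreasing sequences is preserved by
continuous, increasing, convex functions applied termwise. -/
theorem stmt_8 (a b : ℕ → ℝ) (ha : Antitone a) (hb : Antitone b)
    (hmaj : ∀ n : ℕ, ∑ i ∈ Finset.range n, a i ≤ ∑ i ∈ Finset.range n, b i)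
    (f : ℝ → ℝ) (hf_cont : Continuous f) (hf_mono : Monotone f)
    (hf_conv : ConvexOn ℝ Set.univ f) :
    ∀ n : ℕ, ∑ i ∈ Finset.range n, f (a i) ≤ ∑ i ∈ Finset.range n, f (b i) := by
  intro n
  cases n with
  | zero => simp
  | succ m =>
    set c : ℕ → ℝ := cseq f a b with hc
    set d : ℕ → ℝ := fun i => a i - b i with hd
    have hS : ∀ k, ∑ i ∈ Finset.range k, d i ≤ 0 := by
      intro k
      have := hmaj k
      simp only [hd, Finset.sum_sub_distrib]
      linarith
    have habel := abel_est c d (cseq_antitone_succ f a b ha hb hf_conv) hS m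
    have hkey : ∀ i, f (a i) - f (b i) = c i * d i := fun i => cseq_key f a b i
    have h1 : (∑ i ∈ Finset.range (m+1), f (a i)) - ∑ i ∈ Finset.range (m+1), f (b i)
        = ∑ i ∈ Finset.range (m+1), c i * d i := by
      rw [← Finset.sum_sub_distrib]
      exact Finset.sum_congr rfl fun i _ => hkey i
    have h2 : c m * ∑ i ∈ Finset.range (m+1), d i ≤ 0 :=
      mul_nonpos_of_nonneg_of_nonpos (cseq_nonneg f a b ha hb hf_mono m) (hS (m+1))
    linarith
end

section
/- Let a, b : ℕ → ℝ be nonincreasing sequences of nonnegative real numbers such that a is multiplicatively majorized by b. Let f : ℝ → ℝ be a continuous, monotonically increasing function such that the composition x ↦ f(exp(x) − 1) is convex on [0,∞). Then for every n, ∑_{i=1}^n f(a_i) ≤ ∑_{i=1}^n f(b_i). -/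
/-!
Taking `x i = log (1 + a i)` and `y i = log (1 + b i)` turns multiplicative majorization into
weak majorization `x ≼ y`, and `f (a i) = g (x i)` for the convex, increasing function
`g x = f (exp x - 1)`. The claim is then Tomić's theorem `g ∘ x ≼ g ∘ y`: with `t i` a
subgradient of `g` at `x i`, we have `g (y i) - g (x i) ≥ t i * (y i - x i)`, and since `x` is
antitone and `g` convex, `t` is antitone and nonnegative, so Abel summation against the
nonnegative partial sums of `y - x` gives `∑ (g (y i) - g (x i)) ≥ 0`.
-/

open Finset Set Real

def WeaklyMajorized (x y : ℕ → ℝ) : Prop :=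
  ∀ n, ∑ i ∈ range n, x i ≤ ∑ i ∈ range n, y i

def MulMajorized (a b : ℕ → ℝ) : Prop :=
  ∀ n, ∏ i ∈ range n, (1 + a i) ≤ ∏ i ∈ range n, (1 + b i)

section Abel

variable {R : Type*} [CommRing R] [LinearOrder R] [IsStrictOrderedRing R] {t d : ℕ → R}

theorem Antitone.mul_sum_range_le_sum_range_mul (ht : Antitone t)
    (hd : ∀ n, 0 ≤ ∑ i ∈ range n, d i) (n : ℕ) :
    t n * ∑ i ∈ range n, d i ≤ ∑ i ∈ range n, t i * d i := by
  induction n with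
  | zero => simp
  | succ n ih =>
    calc t (n + 1) * ∑ i ∈ range (n + 1), d i
        ≤ t n * ∑ i ∈ range (n + 1), d i := mul_le_mul_of_nonneg_right (ht n.le_succ) (hd _)
      _ = t n * ∑ i ∈ range n, d i + t n * d n := by rw [sum_range_succ, mul_add]
      _ ≤ ∑ i ∈ range (n + 1), t i * d i := by rw [sum_range_succ]; gcongr

theorem Antitone.sum_range_mul_nonneg (ht : Antitone t) (ht0 : ∀ i, 0 ≤ t i)
    (hd : ∀ n, 0 ≤ ∑ i ∈ range n, d i) (n : ℕ) : 0 ≤ ∑ i ∈ range n, t i * d i :=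
  (mul_nonneg (ht0 n) (hd n)).trans (ht.mul_sum_range_le_sum_range_mul hd n)

end Abel

section RightSlope

variable {g : ℝ → ℝ} {c x y z : ℝ}

/-- The infimum of the right secant slopes. For `g` monotone on `Ici c` these are nonnegative, so
this is a genuine subgradient even at the endpoint `c`, where `g` need not be
right-differentiable. -/
noncomputable def rightSlope (g : ℝ → ℝ) (x : ℝ) : ℝ :=
  sInf (slope g x '' Ioi x)

theorem MonotoneOn.rightSlope_le_slope (hgm : MonotoneOn g (Ici c)) (hx : c ≤ x) (hxy : x < y) :
    rightSlope g x ≤ slope g x y :=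
  csInf_le ⟨0, by rintro _ ⟨w, hw, rfl⟩; exact hgm.slope_nonneg hx (hx.trans (le_of_lt hw))⟩
    (mem_image_of_mem _ hxy)

theorem MonotoneOn.rightSlope_nonneg (hgm : MonotoneOn g (Ici c)) (hx : c ≤ x) :
    0 ≤ rightSlope g x :=
  le_csInf (Set.nonempty_Ioi.image _) <| by
    rintro _ ⟨w, hw, rfl⟩; exact hgm.slope_nonneg hx (hx.trans (le_of_lt hw))

theorem ConvexOn.slope_le_rightSlope (hg : ConvexOn ℝ (Ici c) g) (hz : c ≤ z) (hzx : z < x) :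
    slope g z x ≤ rightSlope g x :=
  le_csInf (Set.nonempty_Ioi.image _) <| by
    rintro _ ⟨w, hxw : x < w, rfl⟩
    have hx : c ≤ x := hz.trans hzx.le
    rw [slope_comm]
    exact hg.slope_mono hx ⟨hz, hzx.ne⟩ ⟨hx.trans hxw.le, hxw.ne'⟩ (hzx.trans hxw).le

theorem ConvexOn.monotoneOn_rightSlope (hg : ConvexOn ℝ (Ici c) g)
    (hgm : MonotoneOn g (Ici c)) : MonotoneOn (rightSlope g) (Ici c) := by
  intro x hx y _ hxy
  rcases hxy.eq_or_lt with rfl | hxy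
  · rfl
  exact (hgm.rightSlope_le_slope hx hxy).trans (hg.slope_le_rightSlope hx hxy)

theorem ConvexOn.add_rightSlope_mul_le (hg : ConvexOn ℝ (Ici c) g)
    (hgm : MonotoneOn g (Ici c)) (hx : c ≤ x) (hz : c ≤ z) :
    g x + rightSlope g x * (z - x) ≤ g z := by
  rcases lt_trichotomy z x with hzx | rfl | hxz
  · have := hg.slope_le_rightSlope hz hzx
    rw [slope_def_field, div_le_iff₀ (sub_pos.2 hzx)] at this
    linarith
  · simp
  · have := hgm.rightSlope_le_slope hx hxz
    rw [slope_def_field, le_div_iff₀ (sub_pos.2 hxz)] at this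
    linarith

end RightSlope

theorem ConvexOn.weaklyMajorized_comp {g : ℝ → ℝ} {c : ℝ} {x y : ℕ → ℝ}
    (hg : ConvexOn ℝ (Ici c) g) (hgm : MonotoneOn g (Ici c)) (hx : Antitone x)
    (hxc : ∀ i, c ≤ x i) (hyc : ∀ i, c ≤ y i) (hxy : WeaklyMajorized x y) :
    WeaklyMajorized (g ∘ x) (g ∘ y) := by
  intro n
  set t : ℕ → ℝ := fun i ↦ rightSlope g (x i)
  have ht : Antitone t := fun i j hij ↦ hg.monotoneOn_rightSlope hgm (hxc j) (hxc i) (hx hij)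
  have hsum : 0 ≤ ∑ i ∈ range n, t i * (y i - x i) :=
    ht.sum_range_mul_nonneg (fun i ↦ hgm.rightSlope_nonneg (hxc i))
      (fun m ↦ by rw [sum_sub_distrib, sub_nonneg]; exact hxy m) n
  calc ∑ i ∈ range n, g (x i)
      ≤ ∑ i ∈ range n, (g (x i) + t i * (y i - x i)) := by rw [sum_add_distrib]; linarith
    _ ≤ ∑ i ∈ range n, g (y i) :=
      sum_le_sum fun i _ ↦ hg.add_rightSlope_mul_le hgm (hxc i) (hyc i)

theorem MulMajorized.weaklyMajorized_log_one_add {a b : ℕ → ℝ} (ha : ∀ i, -1 < a i)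
    (hb : ∀ i, -1 < b i) (hab : MulMajorized a b) :
    WeaklyMajorized (fun i ↦ log (1 + a i)) (fun i ↦ log (1 + b i)) := by
  have hpos : ∀ {u : ℝ}, -1 < u → 0 < 1 + u := fun hu ↦ by linarith
  intro n
  rw [← log_prod fun i _ ↦ (hpos (ha i)).ne', ← log_prod fun i _ ↦ (hpos (hb i)).ne']
  exact log_le_log (prod_pos fun i _ ↦ hpos (ha i)) (hab n)

theorem stmt_10_general (a b : ℕ → ℝ) (ha_mono : Antitone a)
    (ha : ∀ i, 0 ≤ a i) (hb : ∀ i, 0 ≤ b i)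
    (hmaj : ∀ n : ℕ, ∏ i ∈ Finset.range n, (1 + a i) ≤ ∏ i ∈ Finset.range n, (1 + b i))
    (f : ℝ → ℝ) (hf_mono : Monotone f)
    (hf_conv : ConvexOn ℝ (Set.Ici 0) (fun x => f (Real.exp x - 1))) :
    ∀ n : ℕ, ∑ i ∈ Finset.range n, f (a i) ≤ ∑ i ∈ Finset.range n, f (b i) := by
  have hlog := MulMajorized.weaklyMajorized_log_one_add (fun i ↦ by linarith [ha i])
    (fun i ↦ by linarith [hb i]) hmaj
  have hgm : MonotoneOn (fun x ↦ f (exp x - 1)) (Ici 0) :=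
    fun u _ v _ huv ↦ hf_mono (by gcongr)
  have hx : Antitone fun i ↦ log (1 + a i) :=
    fun i j hij ↦ log_le_log (by linarith [ha j]) (by linarith [ha_mono hij])
  have hlog_nonneg : ∀ {u : ℝ}, 0 ≤ u → 0 ≤ log (1 + u) := fun hu ↦ log_nonneg (by linarith)
  have hcancel : ∀ {u : ℝ}, 0 ≤ u → exp (log (1 + u)) - 1 = u :=
    fun hu ↦ by rw [exp_log (by linarith)]; ring
  intro n
  simpa [hcancel (ha _), hcancel (hb _)] using
    hf_conv.weaklyMajorized_comp hgm hx (fun i ↦ hlog_nonneg (ha i)) (fun i ↦ hlog_nonneg (hb i))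
      hlog n

/-- Let a, b be nonincreasing nonnegative sequences with a
multiplicatively majorized by b, and f continuous increasing with x ↦ f(exp x − 1)
convex on [0,∞). Then f(a) is weakly majorized by f(b). -/
theorem stmt_10 (a b : ℕ → ℝ) (ha_mono : Antitone a) (hb_mono : Antitone b)
    (ha : ∀ i, 0 ≤ a i) (hb : ∀ i, 0 ≤ b i)
    (hmaj : ∀ n : ℕ, ∏ i ∈ Finset.range n, (1 + a i) ≤ ∏ i ∈ Finset.range n, (1 + b i))
    (f : ℝ → ℝ) (hf_cont : Continuous f) (hf_mono : Monotone f)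
    (hf_conv : ConvexOn ℝ (Set.Ici 0) (fun x => f (Real.exp x - 1))) :
    ∀ n : ℕ, ∑ i ∈ Finset.range n, f (a i) ≤ ∑ i ∈ Finset.range n, f (b i) :=
  stmt_10_general a b ha_mono ha hb hmaj f hf_mono hf_conv
end

section
/- Let a, b : ℕ → ℝ be nonincreasing sequences of nonnegative real numbers. If a is multiplicatively majorized by b, then a is weakly majorized by b; that is, if ∏_{i=1}^n (1+a_i) ≤ ∏_{i=1}^n (1+b_i) for every n, then ∑_{i=1}^n a_i ≤ ∑_{i=1}^n b_i for every n. -/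
/-!
Taking logarithms, the hypothesis says that the partial sums of `log (1 + b i) - log (1 + a i)`
are nonnegative. Since `1 + a i` is nonincreasing and positive, Abel summation keeps the partial
sums of `(1 + a i) * (log (1 + b i) - log (1 + a i))` nonnegative, and each such term is at most
`b i - a i` because `log t ≤ t - 1`.
-/

open Finset Real

theorem Finset.sum_range_mul_nonneg_of_antitone {R : Type*} [Ring R] [PartialOrder R]
    [IsOrderedRing R] {c d : ℕ → R} (hc : Antitone c) (hc0 : ∀ i, 0 ≤ c i)
    (hd : ∀ n, 0 ≤ ∑ i ∈ range n, d i) (n : ℕ) :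
    0 ≤ ∑ i ∈ range n, c i * d i := by
  have hparts := sum_range_by_parts c d n
  simp only [smul_eq_mul] at hparts
  rw [hparts]
  refine sub_nonneg_of_le ((sum_nonpos fun i _ => ?_).trans (mul_nonneg (hc0 _) (hd n)))
  exact mul_nonpos_of_nonpos_of_nonneg (sub_nonpos.2 (hc i.le_succ)) (hd _)

theorem Real.mul_log_sub_log_le_sub {x y : ℝ} (hx : 0 < x) (hy : 0 < y) :
    x * (log y - log x) ≤ y - x := by
  rw [← log_div hy.ne' hx.ne']
  calc x * log (y / x) ≤ x * (y / x - 1) :=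
        mul_le_mul_of_nonneg_left (log_le_sub_one_of_pos (div_pos hy hx)) hx.le
    _ = y - x := by field_simp

theorem sum_range_le_sum_range_of_prod_range_le_prod_range {x y : ℕ → ℝ} (hx : Antitone x)
    (hx0 : ∀ i, 0 < x i) (hy0 : ∀ i, 0 < y i)
    (hprod : ∀ n, ∏ i ∈ range n, x i ≤ ∏ i ∈ range n, y i) (n : ℕ) :
    ∑ i ∈ range n, x i ≤ ∑ i ∈ range n, y i := by
  have hlog : ∀ m, 0 ≤ ∑ i ∈ range m, (log (y i) - log (x i)) := fun m => by
    rw [sum_sub_distrib, sub_nonneg, ← log_prod fun i _ => (hx0 i).ne',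
      ← log_prod fun i _ => (hy0 i).ne']
    exact log_le_log (prod_pos fun i _ => hx0 i) (hprod m)
  calc ∑ i ∈ range n, x i
      ≤ ∑ i ∈ range n, x i + ∑ i ∈ range n, x i * (log (y i) - log (x i)) :=
        le_add_of_nonneg_right
          (sum_range_mul_nonneg_of_antitone hx (fun i => (hx0 i).le) hlog n)
    _ ≤ ∑ i ∈ range n, y i := by
        rw [← sum_add_distrib]
        exact sum_le_sum fun i _ => by linarith [mul_log_sub_log_le_sub (hx0 i) (hy0 i)]

theorem stmt_11_general (a b : ℕ → ℝ) (ha_mono : Antitone a)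
    (ha : ∀ i, 0 ≤ a i) (hb : ∀ i, 0 ≤ b i)
    (hmaj : ∀ n : ℕ, ∏ i ∈ Finset.range n, (1 + a i) ≤ ∏ i ∈ Finset.range n, (1 + b i)) :
    ∀ n : ℕ, ∑ i ∈ Finset.range n, a i ≤ ∑ i ∈ Finset.range n, b i := by
  intro n
  have hsum := sum_range_le_sum_range_of_prod_range_le_prod_range (ha_mono.const_add 1)
    (fun i => by linarith [ha i]) (fun i => by linarith [hb i]) hmaj n
  simpa only [sum_add_distrib, add_le_add_iff_left] using hsum

/-- For nonincreasing nonnegative sequences, multiplicative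
majorization implies weak majorization. -/
theorem stmt_11 (a b : ℕ → ℝ) (ha_mono : Antitone a) (hb_mono : Antitone b)
    (ha : ∀ i, 0 ≤ a i) (hb : ∀ i, 0 ≤ b i)
    (hmaj : ∀ n : ℕ, ∏ i ∈ Finset.range n, (1 + a i) ≤ ∏ i ∈ Finset.range n, (1 + b i)) :
    ∀ n : ℕ, ∑ i ∈ Finset.range n, a i ≤ ∑ i ∈ Finset.range n, b i :=
  stmt_11_general a b ha_mono ha hb hmaj
end

section
/- Let λ, μ : ℕ → ℝ be summable sequences of nonnegative real numbers and define F : [0,1] → ℝ by F(t) = ∑_{n=1}^∞ (1 + t·λ_n + (1−t)·μ_n)·log(1 + t·λ_n + (1−t)·μ_n). Then F is twice differentiable on (0,1) and for every t ∈ (0,1), F''(t) = ∑_{n=1}^∞ (λ_n − μ_n)² / (1 + t·λ_n + (1−t)·μ_n). -/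
/-!
Each term `x * log x`, with `x = 1 + t a + (1 - t) b` affine in `t`, has derivative
`(a - b) (log x + 1)` and second derivative `(a - b)² / x`. On `[0, 1]` we have
`1 ≤ x ≤ 1 + a + b`, hence `0 ≤ log x ≤ a + b`, so the terms and both derivatives are bounded
by `(a + b) (C + 1)` with `C = ∑ (λₙ + μₙ)`. These bounds are summable, so the series may be
differentiated termwise twice.
-/

open Real Set

section OneAddMix

variable {a b C t : ℝ}

lemma hasDerivAt_one_add_mix (a b t : ℝ) :
    HasDerivAt (fun s => 1 + s * a + (1 - s) * b) (a - b) t := by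
  have h := (((hasDerivAt_id t).mul_const a).const_add 1).add
    (((hasDerivAt_id t).const_sub 1).mul_const b)
  exact h.congr_deriv (by ring)

lemma one_le_one_add_mix (ha : 0 ≤ a) (hb : 0 ≤ b) (ht : t ∈ Icc 0 1) :
    1 ≤ 1 + t * a + (1 - t) * b := by
  have := mul_nonneg ht.1 ha
  have := mul_nonneg (sub_nonneg.2 ht.2) hb
  linarith

lemma one_add_mix_le (ha : 0 ≤ a) (hb : 0 ≤ b) (ht : t ∈ Icc 0 1) :
    1 + t * a + (1 - t) * b ≤ 1 + (a + b) := by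
  nlinarith [ht.1, ht.2]

lemma log_one_add_mix_le (ha : 0 ≤ a) (hb : 0 ≤ b) (ht : t ∈ Icc 0 1) :
    log (1 + t * a + (1 - t) * b) ≤ a + b := by
  have hpos := zero_lt_one.trans_le (one_le_one_add_mix ha hb ht)
  linarith [log_le_sub_one_of_pos hpos, one_add_mix_le ha hb ht]

lemma hasDerivAt_mul_log_one_add_mix (hx : 1 + t * a + (1 - t) * b ≠ 0) :
    HasDerivAt (fun s => (1 + s * a + (1 - s) * b) * log (1 + s * a + (1 - s) * b))
      ((a - b) * (log (1 + t * a + (1 - t) * b) + 1)) t := by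
  rw [mul_comm]
  exact (hasDerivAt_mul_log hx).comp t (hasDerivAt_one_add_mix a b t)

lemma hasDerivAt_mul_log_one_add_mix_add_one (hx : 1 + t * a + (1 - t) * b ≠ 0) :
    HasDerivAt (fun s => (a - b) * (log (1 + s * a + (1 - s) * b) + 1))
      ((a - b) ^ 2 / (1 + t * a + (1 - t) * b)) t := by
  exact ((((hasDerivAt_one_add_mix a b t).log hx).add_const 1).const_mul (a - b)).congr_deriv
    (by ring)

lemma norm_mul_log_one_add_mix_le (ha : 0 ≤ a) (hb : 0 ≤ b) (hC : a + b ≤ C)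
    (ht : t ∈ Icc 0 1) :
    ‖(1 + t * a + (1 - t) * b) * log (1 + t * a + (1 - t) * b)‖ ≤ (a + b) * (C + 1) := by
  have hx1 := one_le_one_add_mix ha hb ht
  have hx2 := one_add_mix_le ha hb ht
  have hlog0 := log_nonneg hx1
  have hlog := log_one_add_mix_le ha hb ht
  rw [norm_of_nonneg (by positivity)]
  nlinarith

lemma norm_mul_log_one_add_mix_add_one_le (ha : 0 ≤ a) (hb : 0 ≤ b) (hC : a + b ≤ C)
    (ht : t ∈ Icc 0 1) :
    ‖(a - b) * (log (1 + t * a + (1 - t) * b) + 1)‖ ≤ (a + b) * (C + 1) := by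
  have hlog0 := log_nonneg (one_le_one_add_mix ha hb ht)
  have hlog := log_one_add_mix_le ha hb ht
  rw [norm_mul, norm_of_nonneg (by positivity : 0 ≤ log (1 + t * a + (1 - t) * b) + 1)]
  have hab : ‖a - b‖ ≤ a + b := by
    rw [Real.norm_eq_abs, abs_sub_le_iff]; constructor <;> linarith
  exact mul_le_mul hab (by linarith) (by positivity) (by positivity)

lemma norm_sq_sub_div_one_add_mix_le (ha : 0 ≤ a) (hb : 0 ≤ b) (hC : a + b ≤ C)
    (ht : t ∈ Icc 0 1) :
    ‖(a - b) ^ 2 / (1 + t * a + (1 - t) * b)‖ ≤ (a + b) * (C + 1) := by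
  have hx1 := one_le_one_add_mix ha hb ht
  rw [norm_of_nonneg (by positivity)]
  calc (a - b) ^ 2 / (1 + t * a + (1 - t) * b) ≤ (a - b) ^ 2 := div_le_self (sq_nonneg _) hx1
    _ ≤ (a + b) * (C + 1) := by nlinarith

end OneAddMix

/-- For summable nonnegative sequences λ, μ, the function
F(t) = ∑ (1 + t·λ_n + (1−t)·μ_n)·log(1 + t·λ_n + (1−t)·μ_n) is twice differentiable
on (0,1) with F''(t) = ∑ (λ_n − μ_n)² / (1 + t·λ_n + (1−t)·μ_n). -/
theorem stmt_15 (l m : ℕ → ℝ) (hl : ∀ n, 0 ≤ l n) (hm : ∀ n, 0 ≤ m n)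
    (hl_sum : Summable l) (hm_sum : Summable m) :
    let F : ℝ → ℝ := fun t =>
      ∑' n, (1 + t * l n + (1 - t) * m n) * Real.log (1 + t * l n + (1 - t) * m n)
    ∃ F' : ℝ → ℝ,
      (∀ t ∈ Set.Ioo (0:ℝ) 1, HasDerivAt F (F' t) t) ∧
      (∀ t ∈ Set.Ioo (0:ℝ) 1,
        HasDerivAt F' (∑' n, (l n - m n) ^ 2 / (1 + t * l n + (1 - t) * m n)) t) := by
  intro F
  have hlm : Summable fun n => l n + m n := hl_sum.add hm_sum
  set C := ∑' n, (l n + m n)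
  have hC n : l n + m n ≤ C := hlm.le_tsum n fun j _ => add_nonneg (hl j) (hm j)
  have hu : Summable fun n => (l n + m n) * (C + 1) := hlm.mul_right _
  have hIcc {t : ℝ} (ht : t ∈ Ioo (0:ℝ) 1) : t ∈ Icc (0:ℝ) 1 := Ioo_subset_Icc_self ht
  have hx n {t : ℝ} (ht : t ∈ Ioo (0:ℝ) 1) : 1 + t * l n + (1 - t) * m n ≠ 0 :=
    (zero_lt_one.trans_le (one_le_one_add_mix (hl n) (hm n) (hIcc ht))).ne'
  have hhalf : (1 / 2 : ℝ) ∈ Ioo 0 1 := by norm_num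
  refine ⟨fun t => ∑' n, (l n - m n) * (log (1 + t * l n + (1 - t) * m n) + 1),
    fun t ht => ?_, fun t ht => ?_⟩
  · refine hasDerivAt_tsum_of_isPreconnected hu isOpen_Ioo (convex_Ioo 0 1).isPreconnected
      (fun n s hs => hasDerivAt_mul_log_one_add_mix (hx n hs))
      (fun n s hs => norm_mul_log_one_add_mix_add_one_le (hl n) (hm n) (hC n) (hIcc hs))
      hhalf ?_ ht
    exact .of_norm_bounded hu fun n =>
      norm_mul_log_one_add_mix_le (hl n) (hm n) (hC n) (hIcc hhalf)
  · refine hasDerivAt_tsum_of_isPreconnected hu isOpen_Ioo (convex_Ioo 0 1).isPreconnected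
      (fun n s hs => hasDerivAt_mul_log_one_add_mix_add_one (hx n hs))
      (fun n s hs => norm_sq_sub_div_one_add_mix_le (hl n) (hm n) (hC n) (hIcc hs))
      hhalf ?_ ht
    exact .of_norm_bounded hu fun n =>
      norm_mul_log_one_add_mix_add_one_le (hl n) (hm n) (hC n) (hIcc hhalf)
end

section
/- Let (t_n)_{n≥1} be a sequence of nonnegative real numbers with ∑_{n=1}^∞ t_n = 1. Then the infinite product ∏_{n=1}^∞ (1+t_n) converges and satisfies 2 ≤ ∏_{n=1}^∞ (1+t_n) ≤ e. Moreover, ∏_{n=1}^∞ (1+t_n) = 2 if and only if there is exactly one index m with t_m = 1 and t_n = 0 for all n ≠ m. -/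
/-!
Writing `P = ∏' n, (1 + t n)`, the bounds `1 + ∑ t ≤ ∏ (1 + t) ≤ exp (∑ t)` over finite sets pass
to the limit. Singling out one factor sharpens the lower bound to
`P ≥ (1 + t a) * (2 - t a) = 2 + t a * (1 - t a)` for every index `a`; since `0 ≤ t a ≤ 1`, this
gives `P ≥ 2`, and `P = 2` forces every `t a` to be `0` or `1`, hence exactly one of them to be `1`.
-/

open Finset Filter

theorem Finset.one_add_sum_le_prod_one_add {ι R : Type*} [CommSemiring R] [PartialOrder R]
    [IsOrderedRing R] {f : ι → R} (hf : ∀ i, 0 ≤ f i) (s : Finset ι) :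
    1 + ∑ i ∈ s, f i ≤ ∏ i ∈ s, (1 + f i) := by
  classical
  induction s using Finset.induction with
  | empty => simp
  | @insert a s ha ih =>
    rw [sum_insert ha, prod_insert ha]
    calc 1 + (f a + ∑ i ∈ s, f i)
        ≤ 1 + (f a + ∑ i ∈ s, f i) + f a * ∑ i ∈ s, f i :=
          le_add_of_nonneg_right (mul_nonneg (hf a) (sum_nonneg fun i _ => hf i))
      _ = (1 + f a) * (1 + ∑ i ∈ s, f i) := by ring
      _ ≤ (1 + f a) * ∏ i ∈ s, (1 + f i) :=
          mul_le_mul_of_nonneg_left ih (add_nonneg zero_le_one (hf a))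

section
variable {ι : Type*} {f : ι → ℝ}

theorem Finset.one_add_mul_le_prod_one_add (hf : ∀ i, 0 ≤ f i) {s : Finset ι} {a : ι}
    (ha : a ∈ s) : (1 + f a) * (1 + ∑ i ∈ s, f i - f a) ≤ ∏ i ∈ s, (1 + f i) := by
  classical
  rw [← mul_prod_erase s _ ha, add_sub_assoc, ← sum_erase_eq_sub ha]
  exact mul_le_mul_of_nonneg_left (one_add_sum_le_prod_one_add hf _)
    (add_nonneg zero_le_one (hf a))

theorem one_add_mul_le_tprod_one_add (hf : ∀ i, 0 ≤ f i) {σ : ℝ} (hσ : HasSum f σ) (a : ι) :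
    (1 + f a) * (1 + σ - f a) ≤ ∏' i, (1 + f i) := by
  refine le_of_tendsto_of_tendsto (((hσ.const_add 1).sub_const (f a)).const_mul (1 + f a))
    (Real.multipliable_one_add_of_summable hσ.summable).hasProd ?_
  filter_upwards [eventually_ge_atTop {a}] with s hs
  exact one_add_mul_le_prod_one_add hf (hs (mem_singleton_self a))

theorem tprod_one_add_le_exp (hf : ∀ i, 0 ≤ f i) {σ : ℝ} (hσ : HasSum f σ) :
    ∏' i, (1 + f i) ≤ Real.exp σ :=
  le_of_tendsto_of_tendsto' (Real.multipliable_one_add_of_summable hσ.summable).hasProd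
    ((Real.continuous_exp.tendsto σ).comp hσ) fun s => Real.prod_one_add_le_exp_sum s hf

end

/-- If (t_n) is nonnegative with ∑ t_n = 1, then ∏ (1+t_n) converges,
2 ≤ ∏ (1+t_n) ≤ e, and ∏ (1+t_n) = 2 iff exactly one t_m = 1 and all other t_n = 0. -/
theorem stmt_17 (t : ℕ → ℝ) (ht : ∀ n, 0 ≤ t n) (hsum : HasSum t 1) :
    Multipliable (fun n => 1 + t n) ∧
      2 ≤ (∏' n, (1 + t n)) ∧ (∏' n, (1 + t n)) ≤ Real.exp 1 ∧
      ((∏' n, (1 + t n)) = 2 ↔ ∃ m, t m = 1 ∧ ∀ n ≠ m, t n = 0) := by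
  have ht_le_one : ∀ n, t n ≤ 1 := fun n => le_hasSum hsum n fun m _ => ht m
  have htwo_add_le : ∀ n, 2 + t n * (1 - t n) ≤ ∏' n, (1 + t n) := fun n => by
    linarith [one_add_mul_le_tprod_one_add ht hsum n]
  have hgap : ∀ n, 0 ≤ t n * (1 - t n) := fun n => mul_nonneg (ht n) (by linarith [ht_le_one n])
  refine ⟨Real.multipliable_one_add_of_summable hsum.summable, by linarith [htwo_add_le 0, hgap 0],
    tprod_one_add_le_exp ht hsum, fun h2 => ?_, ?_⟩
  · have h01 : ∀ n, t n = 0 ∨ t n = 1 := fun n => by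
      have : t n * (1 - t n) = 0 := le_antisymm (by linarith [htwo_add_le n]) (hgap n)
      rcases mul_eq_zero.mp this with h | h
      exacts [.inl h, .inr (by linarith)]
    obtain ⟨m, hm⟩ : ∃ m, t m = 1 := by
      by_contra! hne
      have : t = 0 := funext fun n => (h01 n).resolve_right (hne n)
      rw [this] at hsum
      exact one_ne_zero (hsum.unique hasSum_zero)
    refine ⟨m, hm, fun n hn => ?_⟩
    have := sum_le_hasSum {n, m} (fun k _ => ht k) hsum
    rw [sum_pair hn, hm] at this
    linarith [ht n]
  · rintro ⟨m, hm, hzero⟩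
    rw [tprod_eq_mulSingle m fun n hn => by rw [hzero n hn, add_zero], hm]
    norm_num
end

section
/- Let (t_n)_{n≥1} be a sequence of nonnegative real numbers with ∑_{n=1}^∞ t_n = 1. Then log 2 ≤ ∑_{n=1}^∞ log(1+t_n) ≤ 1. Moreover, ∑_{n=1}^∞ log(1+t_n) = log 2 if and only if there is exactly one index m with t_m = 1 and t_n = 0 for all n ≠ m. -/
lemma aux_le (x : ℝ) (hx0 : 0 ≤ x) (hx1 : x ≤ 1) :
    x * Real.log 2 ≤ Real.log (1 + x) := by
  have hpos : (0:ℝ) < 1 + x := by linarith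
  rw [Real.le_log_iff_exp_le hpos]
  have h := convexOn_exp.2 (Set.mem_univ (0:ℝ)) (Set.mem_univ (Real.log 2))
    (by linarith : (0:ℝ) ≤ 1 - x) hx0 (by ring)
  simp only [smul_eq_mul, mul_zero, zero_add, Real.exp_zero, mul_one,
    Real.exp_log (by norm_num : (0:ℝ) < 2)] at h
  linarith

lemma aux_lt (x : ℝ) (hx0 : 0 < x) (hx1 : x < 1) :
    x * Real.log 2 < Real.log (1 + x) := by
  have hpos : (0:ℝ) < 1 + x := by linarith
  rw [Real.lt_log_iff_exp_lt hpos]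
  have hlog2 : (0:ℝ) ≠ Real.log 2 := by
    have := Real.log_pos (by norm_num : (1:ℝ) < 2); linarith
  have h := strictConvexOn_exp.2 (Set.mem_univ (0:ℝ)) (Set.mem_univ (Real.log 2))
    hlog2 (by linarith : (0:ℝ) < 1 - x) hx0 (by ring)
  simp only [smul_eq_mul, mul_zero, zero_add, Real.exp_zero, mul_one,
    Real.exp_log (by norm_num : (0:ℝ) < 2)] at h
  linarith
/-- If (t_n) is nonnegative with ∑ t_n = 1, then
log 2 ≤ ∑ log(1+t_n) ≤ 1, with equality ∑ log(1+t_n) = log 2 iff exactly one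
t_m = 1 and all other t_n = 0. -/
theorem stmt_18 (t : ℕ → ℝ) (ht : ∀ n, 0 ≤ t n) (hsum : HasSum t 1) :
    Summable (fun n => Real.log (1 + t n)) ∧
      Real.log 2 ≤ (∑' n, Real.log (1 + t n)) ∧
      (∑' n, Real.log (1 + t n)) ≤ 1 ∧
      ((∑' n, Real.log (1 + t n)) = Real.log 2 ↔
        ∃ m, t m = 1 ∧ ∀ n ≠ m, t n = 0) := by
  have hS : Summable t := hsum.summable
  have htsum : ∑' n, t n = 1 := hsum.tsum_eq
  have hle1 : ∀ n, t n ≤ 1 := by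
    intro n
    have := Summable.le_tsum hS n (fun m _ => ht m)
    linarith [htsum ▸ this]
  have hgnn : ∀ n, 0 ≤ Real.log (1 + t n) := fun n =>
    Real.log_nonneg (by linarith [ht n])
  have hglet : ∀ n, Real.log (1 + t n) ≤ t n := by
    intro n
    have := Real.log_le_sub_one_of_pos (by linarith [ht n] : (0:ℝ) < 1 + t n)
    linarith
  have hSg : Summable (fun n => Real.log (1 + t n)) :=
    Summable.of_nonneg_of_le hgnn hglet hS
  have hSm : Summable (fun n => t n * Real.log 2) := hS.mul_right _
  have hlow : ∀ n, t n * Real.log 2 ≤ Real.log (1 + t n) :=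
    fun n => aux_le (t n) (ht n) (hle1 n)
  have htsm : ∑' n, t n * Real.log 2 = Real.log 2 := by
    rw [tsum_mul_right, htsum, one_mul]
  refine ⟨hSg, ?_, ?_, ?_⟩
  · calc Real.log 2 = ∑' n, t n * Real.log 2 := htsm.symm
      _ ≤ ∑' n, Real.log (1 + t n) := Summable.tsum_le_tsum hlow hSm hSg
  · calc (∑' n, Real.log (1 + t n)) ≤ ∑' n, t n := Summable.tsum_le_tsum hglet hSg hS
      _ = 1 := htsum
  · constructor
    · intro heq
      -- each term must achieve equality
      have hSd : Summable (fun n => Real.log (1 + t n) - t n * Real.log 2) := hSg.sub hSm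
      have hd0 : ∑' n, (Real.log (1 + t n) - t n * Real.log 2) = 0 := by
        rw [Summable.tsum_sub hSg hSm, heq, htsm, sub_self]
      have hall : ∀ n, Real.log (1 + t n) = t n * Real.log 2 := by
        intro n
        have h1 : Real.log (1 + t n) - t n * Real.log 2 ≤ 0 := by
          calc Real.log (1 + t n) - t n * Real.log 2
              ≤ ∑' m, (Real.log (1 + t m) - t m * Real.log 2) :=
                Summable.le_tsum hSd n (fun m _ => by linarith [hlow m])
            _ = 0 := hd0
        linarith [hlow n]
      have h01 : ∀ n, t n = 0 ∨ t n = 1 := by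
        intro n
        rcases eq_or_lt_of_le (ht n) with h | h
        · exact Or.inl h.symm
        rcases eq_or_lt_of_le (hle1 n) with h' | h'
        · exact Or.inr h'
        exact absurd (hall n) (ne_of_gt (aux_lt (t n) h h'))
      have hm : ∃ m, t m = 1 := by
        by_contra hno
        push_neg at hno
        have : ∀ n, t n = 0 := fun n => (h01 n).resolve_right (hno n)
        have hz : HasSum t 1 := hsum
        have h0 : t = fun _ => (0:ℝ) := funext this
        rw [h0] at hz
        have := hz.unique hasSum_zero
        norm_num at this
      obtain ⟨m, hm⟩ := hm
      refine ⟨m, hm, fun n hn => ?_⟩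
      by_contra hne
      have htn1 : t n = 1 := (h01 n).resolve_left hne
      have : ({m, n} : Finset ℕ).sum t ≤ ∑' k, t k :=
        Summable.sum_le_tsum _ (fun k _ => ht k) hS
      rw [Finset.sum_pair (Ne.symm hn), hm, htn1, htsum] at this
      linarith
    · rintro ⟨m, hm1, hm0⟩
      have : ∑' n, Real.log (1 + t n) = Real.log (1 + t m) :=
        tsum_eq_single m (fun n hn => by rw [hm0 n hn]; simp)
      rw [this, hm1]
      norm_num
end

section
/- Let (t_n)_{n≥1} be a sequence of nonnegative real numbers with ∑_{n=1}^∞ t_n = 1. Then the series ∑_{n=1}^∞ (1 − (1+t_n)^{−(1+t_n)}) converges and its sum is at most 2. -/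
/-- If (t_n) is nonnegative with ∑ t_n = 1, then the series
∑ (1 − (1+t_n)^{−(1+t_n)}) converges and its sum is at most 2. -/
theorem stmt_19 (t : ℕ → ℝ) (ht : ∀ n, 0 ≤ t n) (hsum : HasSum t 1) :
    Summable (fun n => 1 - Real.exp (-((1 + t n) * Real.log (1 + t n)))) ∧
      (∑' n, (1 - Real.exp (-((1 + t n) * Real.log (1 + t n))))) ≤ 2 := by
  set f : ℕ → ℝ := fun n => 1 - Real.exp (-((1 + t n) * Real.log (1 + t n))) with hf
  have hle1 : ∀ n, t n ≤ 1 := by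
    intro n
    exact le_hasSum hsum n (fun j _ => ht j)
  have hbound : ∀ n, f n ≤ 2 * t n := by
    intro n
    have h1 : Real.log (1 + t n) ≤ t n := by
      have := Real.log_le_sub_one_of_pos (x := 1 + t n) (by linarith [ht n])
      linarith
    have hlog0 : 0 ≤ Real.log (1 + t n) := Real.log_nonneg (by linarith [ht n])
    have hu : (1 + t n) * Real.log (1 + t n) ≤ 2 * t n := by
      calc (1 + t n) * Real.log (1 + t n) ≤ (1 + t n) * t n := by
            apply mul_le_mul_of_nonneg_left h1 (by linarith [ht n])
        _ ≤ 2 * t n := by nlinarith [ht n, hle1 n]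
    have hexp : 1 - (1 + t n) * Real.log (1 + t n) ≤
        Real.exp (-((1 + t n) * Real.log (1 + t n))) := by
      have := Real.add_one_le_exp (-((1 + t n) * Real.log (1 + t n)))
      linarith
    simp only [hf]
    linarith
  have hnonneg : ∀ n, 0 ≤ f n := by
    intro n
    have hlog0 : 0 ≤ Real.log (1 + t n) := Real.log_nonneg (by linarith [ht n])
    have : Real.exp (-((1 + t n) * Real.log (1 + t n))) ≤ 1 := by
      rw [Real.exp_le_one_iff]
      nlinarith [ht n]
    simp only [hf]; linarith
  have hs2 : Summable (fun n => 2 * t n) := (hsum.summable).mul_left 2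
  have hsf : Summable f := by
    apply Summable.of_nonneg_of_le hnonneg hbound hs2
  refine ⟨hsf, ?_⟩
  calc (∑' n, f n) ≤ ∑' n, 2 * t n := Summable.tsum_le_tsum hbound hsf hs2
    _ = 2 * ∑' n, t n := by rw [tsum_mul_left]
    _ = 2 := by rw [hsum.tsum_eq]; ring
end
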